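/- For all binary words s and t, P(s ∘ t) = P_A(s)·P^B(t) + P_B(s)·P^A(t) − 1, where ∘ denotes concatenation. -/

import Mathlib

/-- `P s` is the number of distinct subsequences of the binary word `s`
(the letter `A` is `true`, the letter `B` is `false`), including the empty one. -/
def P (s : List Bool) : ℕ := s.sublists.toFinset.card

/-- `PA s` is the number of distinct subsequences of `s` starting with `A` (= `true`),
plus one for the empty subsequence. -/
def PA (s : List Bool) : ℕ :=
  ((s.sublists.toFinset).filter (fun t => t.head? = some true)).card + 1

/-- `PB s` is the number of distinct subsequences of `s` starting with `B` (= `false`),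
plus one for the empty subsequence. -/
def PB (s : List Bool) : ℕ :=
  ((s.sublists.toFinset).filter (fun t => t.head? = some false)).card + 1

/-- `QA s` is the number of distinct subsequences of `s` ending with `A` (= `true`),
plus one for the empty subsequence. -/
def QA (s : List Bool) : ℕ :=
  ((s.sublists.toFinset).filter (fun t => t.getLast? = some true)).card + 1

/-- `QB s` is the number of distinct subsequences of `s` ending with `B` (= `false`),
plus one for the empty subsequence. -/
def QB (s : List Bool) : ℕ :=
  ((s.sublists.toFinset).filter (fun t => t.getLast? = some false)).card + 1

/-- The word `gen a b`, defined by the Euclidean recursion: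
`gen 1 1 = []`, `gen a b = A ∘ gen (a-b) b` if `a > b`, `gen a b = B ∘ gen a (b-a)` if `b > a`. -/
def gen : ℕ → ℕ → List Bool
  | 0, _ => []
  | _ + 1, 0 => []
  | a + 1, b + 1 =>
    if a > b then true :: gen (a - b) (b + 1)
    else if b > a then false :: gen (a + 1) (b - a)
    else []
termination_by a b => a + b
decreasing_by all_goals omega

/-- `star s` swaps all letters `A` and `B` in `s`. -/
def star (s : List Bool) : List Bool := s.map (fun x => !x)

/-- `z n` is the alternating word `ABAB…` of length `n`. -/
def z : ℕ → List Bool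
  | 0 => []
  | n + 1 => true :: star (z n)

/-!
Reversal turns `QA`, `QB` into `PA`, `PB` of the reversed word, so it suffices to show
`P (r.reverse ++ t) + 1 = PA r * PB t + PB r * PA t`. Moving the first letter `x` of `r` to the
front of `t` leaves the right-hand side unchanged: prepending `x` replaces the count of
subsequences beginning with `x` by `P + 1` and keeps the other count, and `P + 1 = PA + PB`
since every nonempty subsequence begins with `A` or with `B`. For `r = []` both sides are `P t + 1`.
-/

section Subsequences

variable {α : Type*} [DecidableEq α]

def headCount (a : α) (s : List α) : ℕ :=
  (s.sublists.toFinset.filter (fun w => w.head? = some a)).card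

theorem filter_head_sublists_cons_self (a : α) (t : List α) :
    (a :: t).sublists.toFinset.filter (fun w => w.head? = some a) =
      t.sublists.toFinset.image (a :: ·) := by
  ext w
  simp only [Finset.mem_filter, Finset.mem_image, List.mem_toFinset, List.mem_sublists]
  constructor
  · rintro ⟨hw, hhead⟩
    obtain ⟨u, rfl⟩ := List.head?_eq_some_iff.mp hhead
    exact ⟨u, List.cons_sublist_cons.mp hw, rfl⟩
  · rintro ⟨u, hu, rfl⟩
    exact ⟨hu.cons_cons a, rfl⟩

theorem headCount_cons_self (a : α) (t : List α) :
    headCount a (a :: t) = t.sublists.toFinset.card := by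
  rw [headCount, filter_head_sublists_cons_self,
    Finset.card_image_of_injective _ List.cons_injective]

theorem headCount_cons_of_ne {a b : α} (hba : b ≠ a) (t : List α) :
    headCount b (a :: t) = headCount b t := by
  unfold headCount
  congr 1
  ext w
  simp only [Finset.mem_filter, List.mem_toFinset, List.mem_sublists, List.sublist_cons_iff]
  constructor
  · rintro ⟨hw | ⟨r, rfl, -⟩, hhead⟩
    · exact ⟨hw, hhead⟩
    · exact absurd (Option.some_injective _ hhead).symm hba
  · exact fun ⟨hw, hhead⟩ => ⟨Or.inl hw, hhead⟩

theorem card_sublists_toFinset_eq_one_add_sum_headCount [Fintype α] (s : List α) :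
    s.sublists.toFinset.card = 1 + ∑ a, headCount a s := by
  rw [Finset.card_eq_sum_card_fiberwise (f := List.head?) (t := Finset.univ)
    fun _ _ => Finset.mem_coe.mpr (Finset.mem_univ _), Fintype.sum_option]
  congr 1
  rw [Finset.card_eq_one]
  refine ⟨[], Finset.ext fun w => ?_⟩
  simp only [Finset.mem_filter, List.mem_toFinset, List.mem_sublists, List.head?_eq_none_iff,
    Finset.mem_singleton]
  exact ⟨And.right, fun hw => ⟨hw ▸ List.nil_sublist s, hw⟩⟩

theorem card_filter_sublists_reverse (p : List α → Prop) [DecidablePred p] (s : List α) :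
    (s.reverse.sublists.toFinset.filter p).card =
      (s.sublists.toFinset.filter (fun w => p w.reverse)).card :=
  Finset.card_nbij' List.reverse List.reverse
    (fun w => by simp [List.sublist_reverse_iff]) (fun w => by simp [List.sublist_reverse_iff])
    (fun w _ => List.reverse_reverse w) (fun w _ => List.reverse_reverse w)

end Subsequences

theorem QA_eq_PA_reverse (s : List Bool) : QA s = PA s.reverse := by
  simp only [QA, PA, card_filter_sublists_reverse, List.head?_reverse]

theorem QB_eq_PB_reverse (s : List Bool) : QB s = PB s.reverse := by
  simp only [QB, PB, card_filter_sublists_reverse, List.head?_reverse]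

theorem P_add_one_eq_PA_add_PB (t : List Bool) : P t + 1 = PA t + PB t := by
  have h := card_sublists_toFinset_eq_one_add_sum_headCount t
  rw [Fintype.sum_bool] at h
  simp only [P, PA, PB, h, headCount]
  omega

theorem PA_cons_true (t : List Bool) : PA (true :: t) = P t + 1 :=
  congrArg (· + 1) (headCount_cons_self true t)

theorem PB_cons_false (t : List Bool) : PB (false :: t) = P t + 1 :=
  congrArg (· + 1) (headCount_cons_self false t)

theorem PA_cons_false (t : List Bool) : PA (false :: t) = PA t :=
  congrArg (· + 1) (headCount_cons_of_ne Bool.false_ne_true.symm t)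

theorem PB_cons_true (t : List Bool) : PB (true :: t) = PB t :=
  congrArg (· + 1) (headCount_cons_of_ne Bool.false_ne_true t)

theorem PA_mul_PB_add_PB_mul_PA_cons (x : Bool) (r t : List Bool) :
    PA (x :: r) * PB t + PB (x :: r) * PA t = PA r * PB (x :: t) + PB r * PA (x :: t) := by
  cases x
  · rw [PA_cons_false, PB_cons_false, PA_cons_false, PB_cons_false,
      P_add_one_eq_PA_add_PB, P_add_one_eq_PA_add_PB]
    ring
  · rw [PA_cons_true, PB_cons_true, PA_cons_true, PB_cons_true,
      P_add_one_eq_PA_add_PB, P_add_one_eq_PA_add_PB]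
    ring

theorem P_reverse_append_add_one (r t : List Bool) :
    P (r.reverse ++ t) + 1 = PA r * PB t + PB r * PA t := by
  induction r generalizing t with
  | nil =>
    rw [List.reverse_nil, List.nil_append, P_add_one_eq_PA_add_PB]
    change PA t + PB t = 1 * PB t + 1 * PA t
    ring
  | cons x r ih =>
    rw [List.reverse_cons, List.append_assoc, List.singleton_append, ih,
      PA_mul_PB_add_PB_mul_PA_cons]

/-- For all binary words `s` and `t`,
`P(s ∘ t) = P_A(s)·P^B(t) + P_B(s)·P^A(t) - 1`. -/
theorem P_append (s t : List Bool) :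
    P (s ++ t) = QA s * PB t + QB s * PA t - 1 := by
  rw [QA_eq_PA_reverse, QB_eq_PB_reverse, ← P_reverse_append_add_one, List.reverse_reverse,
    Nat.add_sub_cancel]
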